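/- arXiv:2502.07520 — 3 statements merged into one kernel-verified Lean document; each statement's English description precedes it below -/
import Mathlib

section
/- For every integer p ≥ 1 and every integer n ≥ 0, the cube polynomial of the Fibonacci p-cube satisfies the polynomial identity C_{Γ^p_n}(x) = Σ_{k≥0} c_k(Γ^p_n) x^k = Σ_{a=0}^{⌊(n+p)/(p+1)⌋} C(n − ap + p, a)·(1+x)^a, and this polynomial has degree exactly ⌊(n+p)/(p+1)⌋. -/
/-- Fibonacci `p`-numbers: `F^p_0 = 0`, `F^p_m = 1` for `1 ≤ m ≤ p`,
and `F^p_m = F^p_{m-1} + F^p_{m-p-1}` for `m ≥ p+1`. -/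
def fibP (p : ℕ) : ℕ → ℕ
  | 0 => 0
  | m + 1 => if m + 1 ≤ p then 1 else fibP p m + fibP p (m - p)

/-- A Fibonacci `p`-string of length `n`: any two `1`s are separated by at least `p` `0`s. -/
def IsFibStr (p : ℕ) {n : ℕ} (u : Fin n → Bool) : Prop :=
  ∀ i j : Fin n, u i = true → u j = true → (i : ℕ) < (j : ℕ) → (i : ℕ) + p + 1 ≤ (j : ℕ)

instance (p n : ℕ) : DecidablePred fun u : Fin n → Bool => IsFibStr p u := fun u =>
  decidable_of_iff
    (∀ i j : Fin n, u i = true → u j = true → (i : ℕ) < (j : ℕ) → (i : ℕ) + p + 1 ≤ (j : ℕ))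
    Iff.rfl

/-- Hamming weight of a binary string. -/
def wt {n : ℕ} (u : Fin n → Bool) : ℕ := (Finset.univ.filter fun i => u i = true).card

/-- The Fibonacci `p`-cube `Γ^p_n`. -/
def FibCube (p n : ℕ) : SimpleGraph {u : Fin n → Bool // IsFibStr p u} where
  Adj u v := (Finset.univ.filter fun i => u.1 i ≠ v.1 i).card = 1
  symm := by
    refine ⟨?_⟩
    intro u v h
    have : (Finset.univ.filter fun i => v.1 i ≠ u.1 i)
        = (Finset.univ.filter fun i => u.1 i ≠ v.1 i) := by
      apply Finset.filter_congr
      intro i _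
      simp [ne_comm]
    rw [this]
    exact h
  loopless := by refine ⟨?_⟩; intro u h; simp at h

instance (p n : ℕ) : DecidableRel (FibCube p n).Adj := fun u v =>
  decidable_of_iff ((Finset.univ.filter fun i => u.1 i ≠ v.1 i).card = 1) Iff.rfl

/-- `c_k(Γ^p_n)`: induced `Q_k`-subgraphs, encoded as pairs (bottom, top). -/
noncomputable def cubeCount (p n k : ℕ) : ℕ :=
  Nat.card {bt : (Fin n → Bool) × (Fin n → Bool) //
    IsFibStr p bt.1 ∧ IsFibStr p bt.2 ∧ (∀ i, bt.1 i = true → bt.2 i = true) ∧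
    (Finset.univ.filter fun i => bt.1 i ≠ bt.2 i).card = k}

/-- `c_{k,d}(Γ^p_n)`: induced `Q_k`-subgraphs with bottom vertex of weight `d`. -/
noncomputable def cubeCountD (p n k d : ℕ) : ℕ :=
  Nat.card {bt : (Fin n → Bool) × (Fin n → Bool) //
    IsFibStr p bt.1 ∧ IsFibStr p bt.2 ∧ (∀ i, bt.1 i = true → bt.2 i = true) ∧
    (Finset.univ.filter fun i => bt.1 i ≠ bt.2 i).card = k ∧ wt bt.1 = d}

/-- Weight enumerator polynomial of `Γ^p_n`. -/
noncomputable def weightPoly (p n : ℕ) : Polynomial ℤ :=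
  ∑ u : {u : Fin n → Bool // IsFibStr p u}, Polynomial.X ^ wt u.1

/-- Distance cube polynomial of `Γ^p_n`, in variables `X 0 = x` and `X 1 = q`. -/
noncomputable def distCubePoly (p n : ℕ) : MvPolynomial (Fin 2) ℤ :=
  ∑ k ∈ Finset.range (n + 1), ∑ d ∈ Finset.range (n + 1),
    (cubeCountD p n k d : MvPolynomial (Fin 2) ℤ) *
      MvPolynomial.X 0 ^ k * MvPolynomial.X 1 ^ d

/-- Flip coordinate `j` of a binary string (`u + δ_j`). -/
def flipCoord {n : ℕ} (u : Fin n → Bool) (j : Fin n) : Fin n → Bool :=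
  Function.update u j (!u j)
namespace FibAux

open Polynomial Finset

/-- All Fibonacci p-strings of length n. -/
def fibSet (p n : ℕ) : Finset (Fin n → Bool) := Finset.univ.filter (IsFibStr p)

/-- Weight enumerator in variable 1+X. -/
noncomputable def W (p n : ℕ) : Polynomial ℤ :=
  ∑ u ∈ fibSet p n, (1 + Polynomial.X) ^ wt u

lemma wt_eq_sum {n : ℕ} (u : Fin n → Bool) :
    wt u = ∑ i : Fin n, (if u i = true then 1 else 0) := by
  classical
  rw [wt, Finset.card_filter]

lemma wt_le {n : ℕ} (u : Fin n → Bool) : wt u ≤ n := by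
  simpa [wt] using Finset.card_filter_le Finset.univ (fun i => u i = true)

/-- Step 1: cubeCount as a sum of binomials over fibSet. -/
lemma cubeCount_eq (p n k : ℕ) :
    cubeCount p n k = ∑ t ∈ fibSet p n, (wt t).choose k := by
  classical
  rw [cubeCount, Nat.card_eq_fintype_card, Fintype.card_subtype]
  have : ∑ t ∈ fibSet p n, (wt t).choose k
      = ((fibSet p n).sigma fun t => (Finset.univ.filter fun i => t i = true).powersetCard k).card := by
    rw [Finset.card_sigma]
    refine Finset.sum_congr rfl fun t _ => ?_
    rw [Finset.card_powersetCard]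
    rfl
  rw [this]
  refine Finset.card_nbij'
    (fun bt => ⟨bt.2, Finset.univ.filter fun i => bt.1 i ≠ bt.2 i⟩)
    (fun td => (fun i => if i ∈ td.2 then false else td.1 i, td.1)) ?_ ?_ ?_ ?_
  · rintro ⟨b, t⟩ hm
    simp only [Finset.mem_coe, Finset.mem_filter, Finset.mem_univ, true_and] at hm
    obtain ⟨hb, ht, hle, hcard⟩ := hm
    simp only [Finset.mem_coe, Finset.mem_sigma, Finset.mem_powersetCard, fibSet, Finset.mem_filter,
      Finset.mem_univ, true_and]
    refine ⟨ht, ?_, hcard⟩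
    intro i hi
    simp only [Finset.mem_filter, Finset.mem_univ, true_and] at hi ⊢
    cases hbi : b i with
    | true =>
      exfalso
      apply hi
      rw [hbi, hle i hbi]
    | false =>
      cases hti : t i with
      | true => rfl
      | false => exact absurd (by rw [hbi, hti]) hi
  · rintro ⟨t, D⟩ hm
    simp only [Finset.mem_coe, Finset.mem_sigma, Finset.mem_powersetCard, fibSet, Finset.mem_filter,
      Finset.mem_univ, true_and] at hm
    obtain ⟨ht, hsub, hcard⟩ := hm
    simp only [Finset.mem_coe, Finset.mem_filter, Finset.mem_univ, true_and]
    have hDt : ∀ i ∈ D, t i = true := by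
      intro i hi
      have := hsub hi
      simpa using this
    have hble : ∀ i : Fin n, (if i ∈ D then false else t i) = true → t i = true := by
      intro i h
      by_cases hi : i ∈ D
      · simp [hi] at h
      · simpa [hi] using h
    refine ⟨?_, ht, hble, ?_⟩
    · intro i j hi hj hij
      exact ht i j (hble i hi) (hble j hj) hij
    · have : (Finset.univ.filter fun i => (if i ∈ D then false else t i) ≠ t i) = D := by
        ext i
        simp only [Finset.mem_filter, Finset.mem_univ, true_and]
        by_cases hi : i ∈ D
        · simp [hi, hDt i hi]
        · simp [hi]
      rw [this, hcard]
  · rintro ⟨b, t⟩ hm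
    simp only [Finset.mem_coe, Finset.mem_filter, Finset.mem_univ, true_and] at hm
    obtain ⟨hb, ht, hle, hcard⟩ := hm
    simp only [Prod.mk.injEq]
    constructor
    · funext i
      by_cases hi : b i = t i
      · simp [hi]
      · have hbi : b i = false := by
          cases h : b i
          · rfl
          · exact absurd (hle i h) (fun hti => hi (h.trans hti.symm))
        simp [hi, hbi]
    · trivial
  · rintro ⟨t, D⟩ hm
    simp only [Finset.mem_coe, Finset.mem_sigma, Finset.mem_powersetCard, fibSet, Finset.mem_filter,
      Finset.mem_univ, true_and] at hm
    obtain ⟨ht, hsub, hcard⟩ := hm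
    have hDt : ∀ i ∈ D, t i = true := fun i hi => by simpa using hsub hi
    refine Sigma.ext rfl ?_
    simp only [heq_eq_eq]
    ext i
    simp only [Finset.mem_filter, Finset.mem_univ, true_and]
    by_cases hi : i ∈ D
    · simp [hi, hDt i hi]
    · simp [hi]


section
variable {p n : ℕ}
lemma snoc_eval (u : Fin n → Bool) (b : Bool) (i : Fin (n+1)) (h : (i : ℕ) < n) :
    (Fin.snoc u b : Fin (n+1) → Bool) i = u ⟨i, h⟩ := by
  have := Fin.snoc_castSucc (α := fun _ : Fin (n+1) => Bool) b u ⟨(i : ℕ), h⟩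
  have hie : Fin.castSucc ⟨(i : ℕ), h⟩ = i := Fin.ext rfl
  rw [hie] at this
  exact this

lemma wt_snoc (u : Fin n → Bool) (b : Bool) :
    wt (Fin.snoc u b : Fin (n+1) → Bool) = wt u + (if b = true then 1 else 0) := by
  rw [wt_eq_sum, wt_eq_sum, Fin.sum_univ_castSucc]
  simp [Fin.snoc_castSucc, Fin.snoc_last]

def ext1 (p n : ℕ) (v : Fin (n - p) → Bool) : Fin (n+1) → Bool :=
  fun i => if h : (i : ℕ) < n - p then v ⟨i, h⟩ else decide ((i : ℕ) = n)

lemma ext1_last (v : Fin (n - p) → Bool) : ext1 p n v (Fin.last n) = true := by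
  have h : ¬ ((n : ℕ) < n - p) := by omega
  simp [ext1, Fin.last, h]

lemma wt_ext1 (v : Fin (n - p) → Bool) : wt (ext1 p n v) = wt v + 1 := by
  rw [wt_eq_sum, wt_eq_sum, Fin.sum_univ_castSucc, ext1_last]
  have hstep : ∀ i : Fin n,
      (if ext1 p n v i.castSucc = true then 1 else 0)
        = (fun m => if h : m < n - p then (if v ⟨m, h⟩ = true then 1 else 0) else 0) (i : ℕ) := by
    intro i
    by_cases h : (i : ℕ) < n - p
    · simp [ext1, h, Fin.castSucc]
    · have hne : ¬ ((i : ℕ) = n) := by omega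
      simp [ext1, h, hne]
  rw [Finset.sum_congr rfl (fun i _ => hstep i),
    Fin.sum_univ_eq_sum_range (fun m => if h : m < n - p then (if v ⟨m, h⟩ = true then 1 else 0) else 0) n]
  rw [← Finset.sum_subset (Finset.range_subset_range.2 (Nat.sub_le n p))
    (fun x _ hx => by simp only [Finset.mem_range] at hx; simp [dif_neg hx])]
  rw [← Fin.sum_univ_eq_sum_range]
  congr 1
  refine Finset.sum_congr rfl fun i _ => ?_
  simp [i.isLt]

lemma isFibStr_snoc_false {u : Fin n → Bool} (h : IsFibStr p u) :
    IsFibStr p (Fin.snoc u false : Fin (n+1) → Bool) := by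
  intro i j hi hj hij
  have hjn : (j : ℕ) < n := by
    by_contra hn
    have hj' := j.isLt
    have : j = Fin.last n := Fin.ext (by rw [Fin.val_last]; omega)
    rw [this, Fin.snoc_last] at hj
    exact absurd hj (by simp)
  have hin : (i : ℕ) < n := by omega
  rw [snoc_eval u false i hin] at hi
  rw [snoc_eval u false j hjn] at hj
  exact h _ _ hi hj hij

lemma isFibStr_init {u : Fin (n+1) → Bool} (h : IsFibStr p u) :
    IsFibStr p (Fin.init u) := by
  intro i j hi hj hij
  exact h i.castSucc j.castSucc hi hj hij

lemma isFibStr_ext1 {v : Fin (n - p) → Bool} (h : IsFibStr p v) :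
    IsFibStr p (ext1 p n v) := by
  intro i j hi hj hij
  by_cases hi' : (i : ℕ) < n - p
  · by_cases hj' : (j : ℕ) < n - p
    · rw [ext1, dif_pos hi'] at hi
      rw [ext1, dif_pos hj'] at hj
      exact h ⟨i, hi'⟩ ⟨j, hj'⟩ hi hj hij
    · rw [ext1, dif_neg hj'] at hj
      have : (j : ℕ) = n := by simpa using hj
      omega
  · rw [ext1, dif_neg hi'] at hi
    have : (i : ℕ) = n := by simpa using hi
    have := j.isLt
    omega

lemma isFibStr_res1 {u : Fin (n+1) → Bool} (h : IsFibStr p u) :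
    IsFibStr p (fun i : Fin (n - p) => u ⟨(i : ℕ), by omega⟩) := by
  intro i j hi hj hij
  exact h ⟨(i : ℕ), by omega⟩ ⟨(j : ℕ), by omega⟩ hi hj hij

lemma ext1_res1 {u : Fin (n+1) → Bool} (h : IsFibStr p u) (hl : u (Fin.last n) = true) :
    ext1 p n (fun i : Fin (n - p) => u ⟨(i : ℕ), by omega⟩) = u := by
  funext i
  by_cases hi : (i : ℕ) < n - p
  · rw [ext1, dif_pos hi]
  · rw [ext1, dif_neg hi]
    by_cases hn : (i : ℕ) = n
    · rw [show i = Fin.last n from Fin.ext hn, hl]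
      simp [hn]
    · have hin : (i : ℕ) < n := by have := i.isLt; omega
      have : u i = false := by
        cases hu : u i
        · rfl
        · have := h i (Fin.last n) hu hl (by simpa [Fin.last] using hin)
          simp only [Fin.val_last] at this
          omega
      rw [this]
      simp [hn]

lemma res1_ext1 (v : Fin (n - p) → Bool) :
    (fun i : Fin (n - p) => ext1 p n v ⟨(i : ℕ), by omega⟩) = v := by
  funext i
  rw [ext1, dif_pos i.isLt]

lemma W_succ (p n : ℕ) : W p (n+1) = W p n + (1 + Polynomial.X) * W p (n - p) := by
  classical
  rw [W, ← Finset.sum_filter_add_sum_filter_not (fibSet p (n+1))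
    (fun u => u (Fin.last n) = false)]
  congr 1
  · -- last bit 0
    refine Finset.sum_nbij' (i := fun u => Fin.init u) (j := fun u => Fin.snoc u false)
      ?_ ?_ ?_ ?_ ?_
    · intro u hu
      simp only [fibSet, Finset.mem_filter, Finset.mem_univ, true_and] at hu ⊢
      exact isFibStr_init hu.1
    · intro u hu
      simp only [fibSet, Finset.mem_filter, Finset.mem_univ, true_and] at hu ⊢
      exact ⟨isFibStr_snoc_false hu, Fin.snoc_last _ _⟩
    · intro u hu
      simp only [fibSet, Finset.mem_filter, Finset.mem_univ, true_and] at hu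
      have := Fin.snoc_init_self u
      rw [hu.2] at this
      exact this
    · intro u _
      exact Fin.init_snoc _ _
    · intro u hu
      simp only [fibSet, Finset.mem_filter, Finset.mem_univ, true_and] at hu
      have h1 : wt u = wt (Fin.init u) := by
        conv_lhs => rw [← Fin.snoc_init_self u, hu.2]
        rw [wt_snoc]
        simp
      rw [h1]
  · -- last bit 1
    have hsum : ∑ v ∈ fibSet p (n - p), (1 + Polynomial.X : Polynomial ℤ) ^ (wt v + 1)
        = (1 + Polynomial.X) * W p (n - p) := by
      rw [W, Finset.mul_sum]
      exact Finset.sum_congr rfl fun v _ => by ring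
    rw [← hsum]
    refine Finset.sum_nbij'
      (i := fun u => (fun i : Fin (n - p) => u ⟨(i : ℕ), by omega⟩))
      (j := fun v => ext1 p n v) ?_ ?_ ?_ ?_ ?_
    · intro u hu
      simp only [fibSet, Finset.mem_filter, Finset.mem_univ, true_and] at hu ⊢
      exact isFibStr_res1 hu.1
    · intro v hv
      simp only [fibSet, Finset.mem_filter, Finset.mem_univ, true_and] at hv ⊢
      refine ⟨isFibStr_ext1 hv, ?_⟩
      rw [ext1_last]
      simp
    · intro u hu
      simp only [fibSet, Finset.mem_filter, Finset.mem_univ, true_and,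
        Bool.not_eq_false] at hu
      exact ext1_res1 hu.1 hu.2
    · intro v _
      exact res1_ext1 v
    · intro u hu
      simp only [fibSet, Finset.mem_filter, Finset.mem_univ, true_and,
        Bool.not_eq_false] at hu
      have h1 : wt u = wt (fun i : Fin (n - p) => u ⟨(i : ℕ), by omega⟩) + 1 := by
        conv_lhs => rw [← ext1_res1 hu.1 hu.2]
        rw [wt_ext1]
      rw [h1]

section NN
def N (p n a : ℕ) : ℕ := (n + p - a * p).choose a

lemma N_eq_zero {p n a : ℕ} (h : n + p < a * (p + 1)) : N p n a = 0 := by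
  have h2 : a * (p + 1) = a * p + a := by ring
  rw [h2] at h
  have ha : 1 ≤ a := by
    rcases Nat.eq_zero_or_pos a with h0 | h0
    · subst h0; simp at h
    · exact h0
  apply Nat.choose_eq_zero_of_lt
  generalize ht : a * p = t at h ⊢
  omega

lemma N_succ {p : ℕ} (hp : 1 ≤ p) (n a : ℕ) :
    N p (n + 1) (a + 1) = N p n (a + 1) + N p (n - p) a := by
  unfold N
  have hs : (a + 1) * p = a * p + p := by ring
  rw [hs]
  have hps : 1 ≤ a → p ≤ a * p := fun ha => by
    calc p = 1 * p := (one_mul p).symm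
    _ ≤ a * p := Nat.mul_le_mul_right p ha
  set s := a * p with hs'
  rcases le_or_gt s n with h | h
  · rcases le_or_gt p n with h2 | h2
    · have e1 : n + 1 + p - (s + p) = (n - s) + 1 := by omega
      have e2 : n + p - (s + p) = n - s := by omega
      have e3 : n - p + p - s = n - s := by omega
      rw [e1, e2, e3, Nat.choose_succ_succ']
      omega
    · have ha : a = 0 := by
        by_contra hne
        have := hps (by omega)
        omega
      subst ha
      simp only [Nat.zero_mul] at hs'
      have e1 : n + 1 + p - (s + p) = n + 1 := by omega
      have e2 : n + p - (s + p) = n := by omega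
      rw [e1, e2, Nat.choose_one_right, Nat.choose_one_right, Nat.choose_zero_right]
  · have ha : 1 ≤ a := by
      rcases Nat.eq_zero_or_pos a with h0 | h0
      · subst h0; simp at hs'; omega
      · exact h0
    have hps' := hps ha
    have e1 : n + 1 + p - (s + p) = 0 := by omega
    have e2 : n + p - (s + p) = 0 := by omega
    have e3 : n - p + p - s = 0 := by
      rcases le_or_gt p n with h2 | h2
      · omega
      · omega
    rw [e1, e2, e3, Nat.choose_eq_zero_of_lt (by omega), Nat.choose_eq_zero_of_lt (by omega)]

lemma N_zero (p n : ℕ) : N p n 0 = 1 := by simp [N]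

lemma N_vanish_high {p n a : ℕ} (h : n < a) : N p n a = 0 := by
  apply N_eq_zero
  have h1 : (n + 1) * (p + 1) ≤ a * (p + 1) := Nat.mul_le_mul_right _ (by omega)
  have h2 : (n + 1) * (p + 1) = n * p + n + p + 1 := by ring
  have h3 : 0 ≤ n * p := Nat.zero_le _
  omega

lemma W_eq_N (p : ℕ) (hp : 1 ≤ p) : ∀ n, W p n =
    ∑ a ∈ Finset.range (n + 1), (N p n a : Polynomial ℤ) * (1 + Polynomial.X) ^ a := by
  intro n
  induction n using Nat.strong_induction_on with
  | _ n ih =>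
    match n with
    | 0 =>
      have hall : ∀ u ∈ fibSet p 0, (1 + Polynomial.X : Polynomial ℤ) ^ wt u = 1 := by
        intro u _
        have : wt u = 0 := by rw [wt_eq_sum]; simp
        rw [this, pow_zero]
      have hcard : (fibSet p 0).card = 1 := by
        rw [fibSet, Finset.filter_true_of_mem (fun u _ i j _ _ _ => i.elim0)]
        simp
      rw [W, Finset.sum_congr rfl hall, Finset.sum_const, hcard]
      simp [N_zero]
    | Nat.succ m =>
      rw [W_succ, ih m (by omega), ih (m - p) (by omega)]
      rw [Finset.sum_range_succ' (fun a => (N p (m+1) a : Polynomial ℤ) * (1 + Polynomial.X) ^ a) (m+1)]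
      have hrec : ∀ a, (N p (m+1) (a+1) : Polynomial ℤ) = (N p m (a+1) : Polynomial ℤ) + (N p (m-p) a : Polynomial ℤ) := by
        intro a
        rw [N_succ hp]
        push_cast
        ring
      calc ∑ a ∈ Finset.range (m+1), (N p m a : Polynomial ℤ) * (1 + Polynomial.X) ^ a
            + (1 + Polynomial.X) * ∑ a ∈ Finset.range (m - p + 1), (N p (m-p) a : Polynomial ℤ) * (1 + Polynomial.X) ^ a
          = (∑ a ∈ Finset.range (m+1), (N p m (a+1) : Polynomial ℤ) * (1 + Polynomial.X) ^ (a+1)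
              + (N p m 0 : Polynomial ℤ) * (1 + Polynomial.X) ^ 0)
            + (1 + Polynomial.X) * ∑ a ∈ Finset.range (m+1), (N p (m-p) a : Polynomial ℤ) * (1 + Polynomial.X) ^ a := by
            congr 1
            · calc ∑ a ∈ Finset.range (m+1), (N p m a : Polynomial ℤ) * (1 + Polynomial.X) ^ a
                  = ∑ a ∈ Finset.range (m+1), (N p m a : Polynomial ℤ) * (1 + Polynomial.X) ^ a
                    + (N p m (m+1) : Polynomial ℤ) * (1 + Polynomial.X) ^ (m+1) := by
                    rw [N_vanish_high (show m < m + 1 by omega)]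
                    simp
                _ = ∑ a ∈ Finset.range (m+2), (N p m a : Polynomial ℤ) * (1 + Polynomial.X) ^ a :=
                    (Finset.sum_range_succ _ (m+1)).symm
                _ = _ := Finset.sum_range_succ' _ (m+1)
            · congr 1
              apply Finset.sum_subset (Finset.range_subset_range.2 (by omega))
              intro a _ ha
              simp only [Finset.mem_range] at ha
              rw [N_vanish_high (by omega)]
              simp
        _ = ∑ a ∈ Finset.range (m+1), (N p (m+1) (a+1) : Polynomial ℤ) * (1 + Polynomial.X) ^ (a+1)
            + (N p (m+1) 0 : Polynomial ℤ) * (1 + Polynomial.X) ^ 0 := by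
            rw [N_zero, N_zero]
            have hsplit : ∑ a ∈ Finset.range (m+1), (N p (m+1) (a+1) : Polynomial ℤ) * (1 + Polynomial.X) ^ (a+1)
                = ∑ a ∈ Finset.range (m+1), ((N p m (a+1) : Polynomial ℤ) * (1 + Polynomial.X) ^ (a+1)
                    + (1 + Polynomial.X) * ((N p (m-p) a : Polynomial ℤ) * (1 + Polynomial.X) ^ a)) :=
              Finset.sum_congr rfl fun a _ => by rw [hrec a]; ring
            rw [hsplit, Finset.sum_add_distrib, Finset.mul_sum]
            ring
end NN

section Final
open Polynomial

lemma binom_expand {m n : ℕ} (h : m ≤ n) :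
    ((1 + X : Polynomial ℤ)) ^ m
      = ∑ k ∈ Finset.range (n + 1), (m.choose k : Polynomial ℤ) * X ^ k := by
  ext j
  rw [Polynomial.coeff_one_add_X_pow, Polynomial.finset_sum_coeff]
  have hterm : ∀ k, ((m.choose k : Polynomial ℤ) * X ^ k).coeff j
      = if j = k then (m.choose k : ℤ) else 0 := by
    intro k
    rw [← Polynomial.C_eq_natCast, Polynomial.coeff_C_mul, Polynomial.coeff_X_pow]
    simp
  rw [Finset.sum_congr rfl fun k _ => hterm k, Finset.sum_ite_eq (Finset.range (n+1)) j]
  by_cases hj : j ∈ Finset.range (n + 1)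
  · simp [hj]
  · simp only [Finset.mem_range] at hj
    have h0 : m.choose j = 0 := Nat.choose_eq_zero_of_lt (by omega)
    simp [Finset.mem_range, h0]

end Final

end

end FibAux

open FibAux in
/-- The cube polynomial of `Γ^p_n` equals
`Σ_{a=0}^{⌊(n+p)/(p+1)⌋} C(n - ap + p, a)·(1+x)^a` and has degree `⌊(n+p)/(p+1)⌋`. -/
theorem cubePoly_eq (p n : ℕ) (hp : 1 ≤ p) :
    (∑ k ∈ Finset.range (n + 1), (cubeCount p n k : Polynomial ℤ) * Polynomial.X ^ k =
      ∑ a ∈ Finset.range ((n + p) / (p + 1) + 1),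
        ((n + p - a * p).choose a : Polynomial ℤ) * (1 + Polynomial.X) ^ a) ∧
    (∑ k ∈ Finset.range (n + 1),
        (cubeCount p n k : Polynomial ℤ) * Polynomial.X ^ k).natDegree =
      (n + p) / (p + 1) := by
  classical
  have hY : (1 + Polynomial.X : Polynomial ℤ).natDegree = 1 := by
    rw [add_comm, ← Polynomial.C_1]
    exact Polynomial.natDegree_X_add_C 1
  set F := (n + p) / (p + 1) with hF
  have hp1 : 0 < p + 1 := by omega
  have hFn : F < n + 1 := by
    rw [hF, Nat.div_lt_iff_lt_mul hp1]
    have h2 : (n + 1) * (p + 1) = n * p + n + p + 1 := by ring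
    have h0 : 0 ≤ n * p := Nat.zero_le _
    omega
  have hW : ∑ k ∈ Finset.range (n + 1), (cubeCount p n k : Polynomial ℤ) * Polynomial.X ^ k
      = W p n := by
    have hcc : ∀ k, (cubeCount p n k : Polynomial ℤ)
        = ∑ t ∈ fibSet p n, ((wt t).choose k : Polynomial ℤ) := by
      intro k
      rw [cubeCount_eq]
      push_cast
      rfl
    calc ∑ k ∈ Finset.range (n+1), (cubeCount p n k : Polynomial ℤ) * Polynomial.X ^ k
        = ∑ k ∈ Finset.range (n+1), ∑ t ∈ fibSet p n,
            ((wt t).choose k : Polynomial ℤ) * Polynomial.X ^ k := by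
          refine Finset.sum_congr rfl fun k _ => ?_
          rw [hcc k, Finset.sum_mul]
      _ = ∑ t ∈ fibSet p n, ∑ k ∈ Finset.range (n+1),
            ((wt t).choose k : Polynomial ℤ) * Polynomial.X ^ k := Finset.sum_comm
      _ = W p n := Finset.sum_congr rfl fun t _ => (binom_expand (wt_le t)).symm
  have hmain : ∑ k ∈ Finset.range (n + 1), (cubeCount p n k : Polynomial ℤ) * Polynomial.X ^ k
      = ∑ a ∈ Finset.range (n + 1), (N p n a : Polynomial ℤ) * (1 + Polynomial.X) ^ a :=
    hW.trans (W_eq_N p hp n)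
  have hvan : ∀ a, F < a → N p n a = 0 := fun a ha =>
    N_eq_zero ((Nat.div_lt_iff_lt_mul hp1).1 ha)
  have hsplit : ∑ a ∈ Finset.range (n+1), (N p n a : Polynomial ℤ) * (1 + Polynomial.X) ^ a
      = ∑ a ∈ Finset.range (F + 1), (N p n a : Polynomial ℤ) * (1 + Polynomial.X) ^ a := by
    symm
    apply Finset.sum_subset (Finset.range_subset_range.2 (by omega))
    intro a _ ha
    simp only [Finset.mem_range] at ha
    rw [hvan a (by omega)]
    simp
  constructor
  · rw [hmain, hsplit]
    rfl
  · rw [hmain]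
    have hNF : 0 < N p n F := by
      apply Nat.choose_pos
      have h1 : F * (p + 1) ≤ n + p := Nat.div_mul_le_self (n + p) (p + 1)
      have h2 : F * (p + 1) = F * p + F := by ring
      rw [h2] at h1
      generalize hgen : F * p = t at h1 ⊢
      omega
    apply le_antisymm
    · refine (Polynomial.natDegree_sum_le _ _).trans ?_
      rw [Finset.fold_max_le]
      refine ⟨Nat.zero_le _, fun a _ => ?_⟩
      simp only [Function.comp_apply]
      rcases le_or_gt a F with h | h
      · refine (Polynomial.natDegree_mul_le).trans ?_
        rw [Polynomial.natDegree_natCast, Polynomial.natDegree_pow, hY]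
        omega
      · rw [hvan a h]
        simp
    · apply Polynomial.le_natDegree_of_ne_zero
      have hcoeff : (∑ a ∈ Finset.range (n+1),
          (N p n a : Polynomial ℤ) * (1 + Polynomial.X) ^ a).coeff F = (N p n F : ℤ) := by
        rw [Polynomial.finset_sum_coeff, Finset.sum_eq_single F]
        · rw [← Polynomial.C_eq_natCast, Polynomial.coeff_C_mul,
            Polynomial.coeff_one_add_X_pow]
          simp
        · intro a _ hne
          rw [← Polynomial.C_eq_natCast, Polynomial.coeff_C_mul,
            Polynomial.coeff_one_add_X_pow]
          rcases lt_or_gt_of_ne hne with h | h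
          · rw [Nat.choose_eq_zero_of_lt h]
            simp
          · rw [hvan a h]
            simp
        · intro hmem
          exact absurd (Finset.mem_range.mpr hFn) hmem
      rw [hcoeff]
      exact_mod_cast hNF.ne'
end

section
/- For every integer p ≥ 1, the weight enumerator polynomials of the Fibonacci p-cubes satisfy the formal power series identity (1 − t − x·t^{p+1}) · Σ_{n≥0} W_{Γ^p_n}(x) t^n = 1 + x·t + x·t^2 + ⋯ + x·t^p, as power series in t with coefficients in the polynomial ring ℤ[x]. -/
private lemma wt_sum_range {n : ℕ} (u : Fin n → Bool) :
    wt u = ∑ i ∈ Finset.range n,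
      (if h : i < n then (if u ⟨i, h⟩ = true then 1 else 0) else 0) := by
  rw [wt, Finset.card_filter,
    ← Fin.sum_univ_eq_sum_range
      (fun i => if h : i < n then (if u ⟨i, h⟩ = true then 1 else 0) else 0) n]
  apply Finset.sum_congr rfl
  intro i _
  rw [dif_pos i.2]

private lemma weightPoly_eq (p n : ℕ) :
    weightPoly p n
      = ∑ u ∈ Finset.univ.filter (fun u : Fin n → Bool => IsFibStr p u),
          (Polynomial.X : Polynomial ℤ) ^ wt u := by
  rw [weightPoly]
  symm
  apply Finset.sum_subtype
  intro x
  constructor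
  · intro hx
    exact (Finset.mem_filter.mp hx).2
  · intro hx
    exact Finset.mem_filter.mpr ⟨Finset.mem_univ _, hx⟩

private lemma weightPoly_zero (p : ℕ) : weightPoly p 0 = 1 := by
  rw [weightPoly_eq]
  rw [show (Finset.univ.filter (fun u : Fin 0 → Bool => IsFibStr p u)) = Finset.univ by
    apply Finset.filter_true_of_mem; intro u _ i; exact i.elim0]
  simp [wt]

private lemma weightPoly_succ (p m : ℕ) :
    weightPoly p (m + 1)
      = weightPoly p m + Polynomial.X * weightPoly p (m - p) := by
  classical
  rw [weightPoly_eq p (m+1), weightPoly_eq p m, weightPoly_eq p (m - p)]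
  rw [← Finset.sum_filter_add_sum_filter_not
      (Finset.univ.filter fun u : Fin (m+1) → Bool => IsFibStr p u)
      (fun u => u (Fin.last m) = true) (fun u => (Polynomial.X : Polynomial ℤ) ^ wt u)]
  rw [add_comm]
  congr 1
  · -- last bit false ↔ strings of length m
    apply Finset.sum_nbij' (i := fun u (k : Fin m) => u ⟨k.1, by omega⟩)
      (j := fun (v : Fin m → Bool) (i : Fin (m+1)) =>
        if h : i.1 < m then v ⟨i.1, h⟩ else false)
    · intro u hu
      simp only [Finset.mem_filter, Finset.mem_univ, true_and] at hu ⊢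
      intro i j hi hj hij
      exact hu.1 ⟨i.1, by omega⟩ ⟨j.1, by omega⟩ hi hj hij
    · intro v hv
      simp only [Finset.mem_filter, Finset.mem_univ, true_and] at hv
      rw [Finset.mem_filter, Finset.mem_filter]
      refine ⟨⟨Finset.mem_univ _, ?_⟩, ?_⟩
      · intro i j hi hj hij
        simp only [] at hi hj
        have hi' : i.1 < m := by
          by_contra h
          rw [dif_neg h] at hi; exact absurd hi (by simp)
        have hj' : j.1 < m := by
          by_contra h
          rw [dif_neg h] at hj; exact absurd hj (by simp)
        rw [dif_pos hi'] at hi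
        rw [dif_pos hj'] at hj
        exact hv ⟨i.1, hi'⟩ ⟨j.1, hj'⟩ hi hj hij
      · intro hlast
        simp only [] at hlast
        rw [dif_neg (by simp [Fin.val_last] : ¬ (Fin.last m).1 < m)] at hlast
        exact absurd hlast (by simp)
    · intro u hu
      simp only [Finset.mem_filter, Finset.mem_univ, true_and] at hu
      funext i
      by_cases h : i.1 < m
      · simp only [dif_pos h]
      · simp only [dif_neg h]
        have hi : i = Fin.last m := by
          apply Fin.ext; simp only [Fin.val_last]; omega
        rw [hi]
        have := hu.2
        cases hul : u (Fin.last m)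
        · rfl
        · exact absurd hul this
    · intro v hv
      funext k
      simp only [dif_pos k.2]
    · intro u hu
      simp only [Finset.mem_filter, Finset.mem_univ, true_and] at hu
      congr 1
      rw [wt_sum_range, wt_sum_range, Finset.sum_range_succ]
      have hlast : (if h : m < m + 1 then (if u ⟨m, h⟩ = true then 1 else 0) else 0) = 0 := by
        rw [dif_pos (by omega)]
        have hul : u ⟨m, by omega⟩ = false := by
          have h2 := hu.2
          cases hul : u (Fin.last m)
          · exact hul
          · exact absurd hul h2
        simp [hul]
      rw [hlast, add_zero]
      apply Finset.sum_congr rfl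
      intro i hi
      have hi' : i < m := Finset.mem_range.mp hi
      rw [dif_pos (by omega : i < m + 1), dif_pos hi']
  · -- last bit true ↔ strings of length m - p, weight shift 1
    rw [Finset.mul_sum]
    apply Finset.sum_nbij' (i := fun u (k : Fin (m - p)) => u ⟨k.1, by omega⟩)
      (j := fun (v : Fin (m - p) → Bool) (i : Fin (m+1)) =>
        if h : i.1 < m - p then v ⟨i.1, h⟩ else decide (i.1 = m))
    · intro u hu
      simp only [Finset.mem_filter, Finset.mem_univ, true_and] at hu ⊢
      intro i j hi hj hij
      exact hu.1 ⟨i.1, by omega⟩ ⟨j.1, by omega⟩ hi hj hij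
    · intro v hv
      simp only [Finset.mem_filter, Finset.mem_univ, true_and] at hv
      rw [Finset.mem_filter, Finset.mem_filter]
      refine ⟨⟨Finset.mem_univ _, ?_⟩, ?_⟩
      · intro i j hi hj hij
        simp only [] at hi hj
        have hjm : j.1 ≤ m := by omega
        have him : i.1 < m := by omega
        have hi' : i.1 < m - p := by
          by_contra h
          rw [dif_neg h] at hi
          simp only [decide_eq_true_eq] at hi
          omega
        rw [dif_pos hi'] at hi
        by_cases hj' : j.1 < m - p
        · rw [dif_pos hj'] at hj
          exact hv ⟨i.1, hi'⟩ ⟨j.1, hj'⟩ hi hj hij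
        · rw [dif_neg hj'] at hj
          simp only [decide_eq_true_eq] at hj
          omega
      · show (if h : (Fin.last m).1 < m - p then v ⟨(Fin.last m).1, h⟩
            else decide ((Fin.last m).1 = m)) = true
        rw [dif_neg (by simp only [Fin.val_last]; omega : ¬ (Fin.last m).1 < m - p)]
        simp [Fin.val_last]
    · intro u hu
      simp only [Finset.mem_filter, Finset.mem_univ, true_and] at hu
      funext i
      by_cases h : i.1 < m - p
      · simp only [dif_pos h]
      · simp only [dif_neg h]
        by_cases him : i.1 = m
        · have hie : i = Fin.last m := by
            apply Fin.ext; simp only [Fin.val_last]; exact him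
          rw [hie]
          rw [show (Fin.last m).1 = m from rfl]
          simp [hu.2]
        · have hfalse : u i = false := by
            cases hui : u i
            · rfl
            · have := hu.1 i (Fin.last m) hui hu.2
                (by simp only [Fin.val_last]; omega)
              simp only [Fin.val_last] at this
              omega
          simp [hfalse, him]
    · intro v hv
      funext k
      simp only [dif_pos k.2]
    · intro u hu
      simp only [Finset.mem_filter, Finset.mem_univ, true_and] at hu
      have hw : wt u = wt (fun k : Fin (m - p) => u ⟨k.1, by omega⟩) + 1 := by
        rw [wt_sum_range, wt_sum_range, Finset.sum_range_succ]
        have hlast : (if h : m < m + 1 then (if u ⟨m, h⟩ = true then 1 else 0) else 0) = 1 := by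
          rw [dif_pos (by omega)]
          have : u ⟨m, by omega⟩ = true := hu.2
          simp [this]
        rw [hlast]
        congr 1
        rw [← Finset.sum_subset (Finset.range_subset_range.mpr (by omega : m - p ≤ m))]
        · apply Finset.sum_congr rfl
          intro i hi
          have hi' : i < m - p := Finset.mem_range.mp hi
          rw [dif_pos (by omega : i < m + 1), dif_pos hi']
        · intro i hi hni
          have hi1 : i < m := Finset.mem_range.mp hi
          have hi2 : ¬ i < m - p := fun h => hni (Finset.mem_range.mpr h)
          rw [dif_pos (by omega : i < m + 1)]
          have hfalse : u ⟨i, by omega⟩ = false := by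
            cases hui : u ⟨i, by omega⟩
            · rfl
            · have := hu.1 ⟨i, by omega⟩ (Fin.last m) hui hu.2
                (by simp only [Fin.val_last]; omega)
              simp only [Fin.val_last] at this
              omega
          simp [hfalse]
      rw [hw, pow_succ, mul_comm]


/-- Generating function of the weight enumerator polynomials:
`(1 - t - x·t^{p+1}) · Σ_n W_{Γ^p_n}(x) t^n = 1 + x·t + ⋯ + x·t^p`,
in `(ℤ[x])[[t]]`. -/
theorem weightPoly_genFun (p : ℕ) (hp : 1 ≤ p) :
    ((1 : PowerSeries (Polynomial ℤ)) - PowerSeries.X -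
        PowerSeries.C (R := Polynomial ℤ) Polynomial.X * PowerSeries.X ^ (p + 1)) *
        PowerSeries.mk (fun n => weightPoly p n) =
      1 + ∑ i ∈ Finset.Icc 1 p,
        PowerSeries.C (R := Polynomial ℤ) Polynomial.X * PowerSeries.X ^ i := by
  have key : ((1 : PowerSeries (Polynomial ℤ)) - PowerSeries.X -
        PowerSeries.C (R := Polynomial ℤ) Polynomial.X * PowerSeries.X ^ (p + 1)) *
        PowerSeries.mk (fun n => weightPoly p n)
      = PowerSeries.mk (fun n => weightPoly p n)
        - PowerSeries.X ^ 1 * PowerSeries.mk (fun n => weightPoly p n)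
        - PowerSeries.C (R := Polynomial ℤ) Polynomial.X *
            (PowerSeries.X ^ (p + 1) * PowerSeries.mk (fun n => weightPoly p n)) := by
    ring
  rw [key]
  ext n
  simp only [map_sub, map_add, PowerSeries.coeff_mk, PowerSeries.coeff_X_pow_mul',
    PowerSeries.coeff_C_mul, PowerSeries.coeff_one, map_sum, PowerSeries.coeff_X_pow,
    mul_ite, mul_one, mul_zero, Finset.sum_ite_eq, Finset.mem_Icc]
  rcases n with _ | m
  · simp [weightPoly_zero]
  · rw [weightPoly_succ p m]
    simp only [Nat.add_sub_cancel, if_pos (by omega : 1 ≤ m + 1),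
      if_neg (by omega : ¬ m + 1 = 0), zero_add]
    by_cases h : p ≤ m
    · rw [if_pos (by omega : p + 1 ≤ m + 1), if_neg (by omega : ¬ (1 ≤ m + 1 ∧ m + 1 ≤ p))]
      have h2 : m + 1 - (p + 1) = m - p := by omega
      rw [h2]
      ring
    · rw [if_neg (by omega : ¬ p + 1 ≤ m + 1), if_pos (by omega : 1 ≤ m + 1 ∧ m + 1 ≤ p)]
      have h2 : m - p = 0 := by omega
      rw [h2, weightPoly_zero]
      ring
end

section
/- For all integers p ≥ 1 and n ≥ p, the irregularity of the Fibonacci p-cube satisfies irr(Γ^p_n) = 2·Σ_{d=1}^{p} |E(Γ^p_{n−d})|, where |E(Γ^p_{n−d})| is the number of edges of the Fibonacci p-cube of dimension n − d. -/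
section Aux
open Finset

variable {p n : ℕ}

/-- Position `i` is "free" in `u`: all positions within distance `p` of `i` are `0`. -/
def Free (p : ℕ) {n : ℕ} (u : Fin n → Bool) (i : Fin n) : Prop :=
  ∀ t : Fin n, (t : ℕ) ≤ (i : ℕ) + p → (i : ℕ) ≤ (t : ℕ) + p → u t = false

instance (p : ℕ) {n : ℕ} (u : Fin n → Bool) : DecidablePred (Free p u) := fun i =>
  decidable_of_iff (∀ t : Fin n, (t : ℕ) ≤ (i : ℕ) + p → (i : ℕ) ≤ (t : ℕ) + p → u t = false)
    Iff.rfl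

lemma Free.self {u : Fin n → Bool} {i : Fin n} (h : Free p u i) : u i = false :=
  h i (by omega) (by omega)

lemma flipCoord_apply {u : Fin n → Bool} {j i : Fin n} :
    flipCoord u j i = if i = j then !u j else u i := by
  simp [flipCoord, Function.update]

lemma flipCoord_self {u : Fin n → Bool} {j : Fin n} : flipCoord u j j = !u j := by
  simp [flipCoord_apply]

lemma flipCoord_ne {u : Fin n → Bool} {j i : Fin n} (h : i ≠ j) : flipCoord u j i = u i := by
  simp [flipCoord_apply, h]

lemma free_iff_flip {u : Fin n → Bool} (hu : IsFibStr p u) (j : Fin n) :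
    Free p u j ↔ (u j = false ∧ IsFibStr p (flipCoord u j)) := by
  constructor
  · intro h
    refine ⟨h.self, ?_⟩
    intro a b ha hb hab
    rcases eq_or_ne a j with heq | haj
    · subst heq
      rcases eq_or_ne b a with heq2 | hbj
      · omega
      · rw [flipCoord_ne hbj] at hb
        by_contra hc
        exact absurd (h b (by omega) (by omega)) (by simp [hb])
    · rw [flipCoord_ne haj] at ha
      rcases eq_or_ne b j with heq | hbj
      · subst heq
        by_contra hc
        exact absurd (h a (by omega) (by omega)) (by simp [ha])
      · rw [flipCoord_ne hbj] at hb
        exact hu a b ha hb hab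
  · rintro ⟨hj, hv⟩
    intro t h1 h2
    by_contra hc
    have ht : u t = true := by revert hc; cases u t <;> simp
    have htj : t ≠ j := by rintro rfl; rw [hj] at ht; simp at ht
    have hvt : flipCoord u j t = true := by rw [flipCoord_ne htj]; exact ht
    have hvj : flipCoord u j j = true := by rw [flipCoord_self, hj]; rfl
    rcases lt_trichotomy (t : ℕ) (j : ℕ) with h | h | h
    · have := hv t j hvt hvj h; omega
    · exact htj (Fin.ext h)
    · have := hv j t hvj hvt h; omega

lemma flip_one_valid {u : Fin n → Bool} (hu : IsFibStr p u) {j : Fin n} (hj : u j = true) :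
    IsFibStr p (flipCoord u j) := by
  intro a b ha hb hab
  have ha' : u a = true := by
    rcases eq_or_ne a j with rfl | h
    · rw [flipCoord_self, hj] at ha; simp at ha
    · rwa [flipCoord_ne h] at ha
  have hb' : u b = true := by
    rcases eq_or_ne b j with rfl | h
    · rw [flipCoord_self, hj] at hb; simp at hb
    · rwa [flipCoord_ne h] at hb
  exact hu a b ha' hb' hab

lemma flipCoord_injective {u : Fin n → Bool} {j j' : Fin n}
    (h : flipCoord u j = flipCoord u j') : j = j' := by
  by_contra hne
  have h1 := congrFun h j
  rw [flipCoord_self, flipCoord_ne hne] at h1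
  cases u j <;> simp_all

lemma adj_iff_flip {u v : {u : Fin n → Bool // IsFibStr p u}} :
    (FibCube p n).Adj u v ↔ ∃ j, v.1 = flipCoord u.1 j := by
  constructor
  · intro h
    rw [show (FibCube p n).Adj u v = ((Finset.univ.filter fun i => u.1 i ≠ v.1 i).card = 1)
      from rfl] at h
    rw [Finset.card_eq_one] at h
    obtain ⟨j, hj⟩ := h
    refine ⟨j, funext fun i => ?_⟩
    rcases eq_or_ne i j with rfl | hij
    · have : i ∈ Finset.univ.filter fun i => u.1 i ≠ v.1 i := by rw [hj]; exact Finset.mem_singleton_self i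
      rw [Finset.mem_filter] at this
      rw [flipCoord_self]
      revert this; cases u.1 i <;> cases v.1 i <;> simp
    · have : i ∉ Finset.univ.filter fun i' => u.1 i' ≠ v.1 i' := by rw [hj]; simp [hij]
      rw [Finset.mem_filter] at this
      rw [flipCoord_ne hij]
      revert this; cases u.1 i <;> cases v.1 i <;> simp
  · rintro ⟨j, hj⟩
    rw [show (FibCube p n).Adj u v = ((Finset.univ.filter fun i => u.1 i ≠ v.1 i).card = 1)
      from rfl]
    have : (Finset.univ.filter fun i => u.1 i ≠ v.1 i) = {j} := by
      ext i
      simp only [Finset.mem_filter, Finset.mem_univ, true_and, Finset.mem_singleton, hj]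
      rcases eq_or_ne i j with rfl | hij
      · rw [flipCoord_self]; cases u.1 i <;> simp
      · rw [flipCoord_ne hij]; simp [hij]
    rw [this, Finset.card_singleton]

lemma degree_eq (u : {u : Fin n → Bool // IsFibStr p u}) :
    (FibCube p n).degree u
      = wt u.1 + (Finset.univ.filter fun i => Free p u.1 i).card := by
  have h1 : (FibCube p n).degree u
      = (Finset.univ.filter fun j : Fin n => IsFibStr p (flipCoord u.1 j)).card := by
    rw [SimpleGraph.degree]
    refine (Finset.card_bij
      (fun j hj => (⟨flipCoord u.1 j, (Finset.mem_filter.mp hj).2⟩ :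
        {w : Fin n → Bool // IsFibStr p w})) ?_ ?_ ?_).symm
    · intro j hj
      rw [SimpleGraph.mem_neighborFinset, adj_iff_flip]
      exact ⟨j, rfl⟩
    · intro j1 h1 j2 h2 heq
      exact flipCoord_injective (congrArg Subtype.val heq)
    · intro v hv
      rw [SimpleGraph.mem_neighborFinset, adj_iff_flip] at hv
      obtain ⟨j, hj⟩ := hv
      refine ⟨j, Finset.mem_filter.mpr ⟨Finset.mem_univ j, hj ▸ v.2⟩, ?_⟩
      exact Subtype.ext hj.symm
  have h2 : ∀ j : Fin n, IsFibStr p (flipCoord u.1 j) ↔ (u.1 j = true ∨ Free p u.1 j) := by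
    intro j
    constructor
    · intro h
      cases hj : u.1 j with
      | true => exact Or.inl rfl
      | false => exact Or.inr ((free_iff_flip u.2 j).mpr ⟨hj, h⟩)
    · rintro (h | h)
      · exact flip_one_valid u.2 h
      · exact ((free_iff_flip u.2 j).mp h).2
  have h3 : (Finset.univ.filter fun j : Fin n => IsFibStr p (flipCoord u.1 j))
      = (Finset.univ.filter fun j : Fin n => u.1 j = true ∨ Free p u.1 j) :=
    Finset.filter_congr (fun j _ => by simpa using h2 j)
  rw [h1, h3, Finset.filter_or, Finset.card_union_of_disjoint, wt]
  rw [Finset.disjoint_filter]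
  intro j _ hj hfree
  rw [hfree.self] at hj
  simp at hj


lemma flipCoord_flipCoord {u : Fin n → Bool} {j : Fin n} :
    flipCoord (flipCoord u j) j = u := by
  funext i
  rcases eq_or_ne i j with rfl | h
  · rw [flipCoord_self, flipCoord_self]; cases u i <;> rfl
  · rw [flipCoord_ne h, flipCoord_ne h]

lemma wt_flip {u : Fin n → Bool} {j : Fin n} (hj : u j = false) :
    wt (flipCoord u j) = wt u + 1 := by
  have h : (Finset.univ.filter fun i => flipCoord u j i = true)
      = insert j (Finset.univ.filter fun i => u i = true) := by
    ext i
    simp only [Finset.mem_filter, Finset.mem_univ, true_and, Finset.mem_insert]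
    rcases eq_or_ne i j with rfl | h
    · rw [flipCoord_self, hj]; simp
    · rw [flipCoord_ne h]; simp [h]
  rw [wt, h, Finset.card_insert_of_notMem (by simp [hj]), wt]

/-- The set of (vertex, free coordinate) pairs; in bijection with edges. -/
def pairFinset (p n : ℕ) : Finset ({u : Fin n → Bool // IsFibStr p u} × Fin n) :=
  Finset.univ.filter fun x => Free p x.1.1 x.2

/-- The other endpoint of the edge determined by a pair. -/
def flipVert (p : ℕ) {n : ℕ} (x : {u : Fin n → Bool // IsFibStr p u} × Fin n) :
    {u : Fin n → Bool // IsFibStr p u} :=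
  if h : IsFibStr p (flipCoord x.1.1 x.2) then ⟨flipCoord x.1.1 x.2, h⟩ else x.1

lemma flipVert_of_free {x : {u : Fin n → Bool // IsFibStr p u} × Fin n}
    (h : Free p x.1.1 x.2) :
    (flipVert p x).1 = flipCoord x.1.1 x.2 := by
  rw [flipVert, dif_pos ((free_iff_flip x.1.2 x.2).mp h).2]

lemma sum_edgeFinset {M : Type*} [AddCommMonoid M]
    (f : Sym2 {u : Fin n → Bool // IsFibStr p u} → M) :
    ∑ e ∈ (FibCube p n).edgeFinset, f e
      = ∑ x ∈ pairFinset p n, f s(x.1, flipVert p x) := by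
  refine (Finset.sum_bij (fun x _ => s(x.1, flipVert p x)) ?_ ?_ ?_ (fun x hx => rfl)).symm
  · intro x hx
    have hfree : Free p x.1.1 x.2 := (Finset.mem_filter.mp hx).2
    rw [SimpleGraph.mem_edgeFinset, SimpleGraph.mem_edgeSet, adj_iff_flip]
    exact ⟨x.2, flipVert_of_free hfree⟩
  · intro x1 h1 x2 h2 heq
    have hf1 : Free p x1.1.1 x1.2 := (Finset.mem_filter.mp h1).2
    have hf2 : Free p x2.1.1 x2.2 := (Finset.mem_filter.mp h2).2
    rw [Sym2.eq_iff] at heq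
    rcases heq with ⟨ha, hb⟩ | ⟨ha, hb⟩
    · have : flipCoord x1.1.1 x1.2 = flipCoord x1.1.1 x2.2 := by
        have := congrArg Subtype.val hb
        rw [flipVert_of_free hf1, flipVert_of_free hf2, ← ha] at this
        exact this
      exact Prod.ext ha (flipCoord_injective this)
    · exfalso
      have e1 : x2.1.1 = flipCoord x1.1.1 x1.2 := by
        rw [← hb, flipVert_of_free hf1]
      have e2 : x1.1.1 = flipCoord x2.1.1 x2.2 := by
        have := congrArg Subtype.val ha
        rwa [flipVert_of_free hf2] at this
      have w1 : wt x2.1.1 = wt x1.1.1 + 1 := by rw [e1, wt_flip hf1.self]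
      have w2 : wt x1.1.1 = wt x2.1.1 + 1 := by rw [e2, wt_flip hf2.self]
      omega
  · intro e he
    rw [SimpleGraph.mem_edgeFinset] at he
    induction e with
    | _ a b =>
      rw [SimpleGraph.mem_edgeSet, adj_iff_flip] at he
      obtain ⟨j, hj⟩ := he
      cases haj : a.1 j with
      | false =>
        have hfree : Free p a.1 j := (free_iff_flip a.2 j).mpr ⟨haj, hj ▸ b.2⟩
        refine ⟨(a, j), Finset.mem_filter.mpr ⟨Finset.mem_univ _, hfree⟩, ?_⟩
        have : flipVert p (a, j) = b := Subtype.ext (by rw [flipVert_of_free hfree]; exact hj.symm)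
        show s(a, flipVert p (a, j)) = s(a, b)
        rw [this]
      | true =>
        have hbj : b.1 j = false := by rw [hj, flipCoord_self, haj]; rfl
        have hab : a.1 = flipCoord b.1 j := by rw [hj, flipCoord_flipCoord]
        have hfree : Free p b.1 j := (free_iff_flip b.2 j).mpr ⟨hbj, hab ▸ a.2⟩
        refine ⟨(b, j), Finset.mem_filter.mpr ⟨Finset.mem_univ _, hfree⟩, ?_⟩
        have : flipVert p (b, j) = a := Subtype.ext (by rw [flipVert_of_free hfree]; exact hab.symm)
        show s(b, flipVert p (b, j)) = s(a, b)
        rw [this, Sym2.eq_swap]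

lemma edge_count (p m : ℕ) :
    Nat.card (FibCube p m).edgeSet = (pairFinset p m).card := by
  have h := sum_edgeFinset (p := p) (n := m) (fun _ => (1 : ℕ))
  simp only [Finset.sum_const, smul_eq_mul, mul_one] at h
  rw [Nat.card_eq_card_toFinset]
  exact h


/-- Number of free positions of `u` within distance `p` of `j`, other than `j`. -/
def diffCount (p : ℕ) {n : ℕ} (u : Fin n → Bool) (j : Fin n) : ℕ :=
  (Finset.univ.filter fun i =>
    Free p u i ∧ i ≠ j ∧ (i : ℕ) ≤ (j : ℕ) + p ∧ (j : ℕ) ≤ (i : ℕ) + p).card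

lemma free_flip_iff {u : Fin n → Bool} {j : Fin n} (hj : u j = false) (i : Fin n) :
    Free p (flipCoord u j) i
      ↔ Free p u i ∧ ¬((i : ℕ) ≤ (j : ℕ) + p ∧ (j : ℕ) ≤ (i : ℕ) + p) := by
  constructor
  · intro h
    have hnear : ¬((i : ℕ) ≤ (j : ℕ) + p ∧ (j : ℕ) ≤ (i : ℕ) + p) := by
      rintro ⟨h1, h2⟩
      have := h j h2 h1
      rw [flipCoord_self, hj] at this
      simp at this
    refine ⟨?_, hnear⟩
    intro t h1 h2
    have htj : t ≠ j := by rintro rfl; exact hnear ⟨h2, h1⟩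
    have := h t h1 h2
    rwa [flipCoord_ne htj] at this
  · rintro ⟨h, hnear⟩
    intro t h1 h2
    have htj : t ≠ j := by rintro rfl; exact hnear ⟨h2, h1⟩
    rw [flipCoord_ne htj]
    exact h t h1 h2

lemma zcount_split {u : Fin n → Bool} {j : Fin n} (hfree : Free p u j) :
    (Finset.univ.filter fun i => Free p u i).card
      = (Finset.univ.filter fun i => Free p (flipCoord u j) i).card + 1 + diffCount p u j := by
  classical
  have hsplit := Finset.card_filter_add_card_filter_not
    (s := Finset.univ.filter fun i => Free p u i)
    (p := fun i => (i : ℕ) ≤ (j : ℕ) + p ∧ (j : ℕ) ≤ (i : ℕ) + p)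
  rw [Finset.filter_filter, Finset.filter_filter] at hsplit
  have hv : (Finset.univ.filter fun i => Free p (flipCoord u j) i)
      = (Finset.univ.filter fun i =>
          Free p u i ∧ ¬((i : ℕ) ≤ (j : ℕ) + p ∧ (j : ℕ) ≤ (i : ℕ) + p)) :=
    Finset.filter_congr fun i _ => by simpa using free_flip_iff hfree.self i
  have hnear : (Finset.univ.filter fun i =>
        Free p u i ∧ ((i : ℕ) ≤ (j : ℕ) + p ∧ (j : ℕ) ≤ (i : ℕ) + p))
      = insert j (Finset.univ.filter fun i =>
          Free p u i ∧ i ≠ j ∧ (i : ℕ) ≤ (j : ℕ) + p ∧ (j : ℕ) ≤ (i : ℕ) + p) := by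
    ext i
    simp only [Finset.mem_filter, Finset.mem_univ, true_and, Finset.mem_insert]
    constructor
    · rintro ⟨h1, h2, h3⟩
      rcases eq_or_ne i j with rfl | hij
      · exact Or.inl rfl
      · exact Or.inr ⟨h1, hij, h2, h3⟩
    · rintro (rfl | ⟨h1, _, h2, h3⟩)
      · exact ⟨hfree, by omega, by omega⟩
      · exact ⟨h1, h2, h3⟩
  have hjnot : j ∉ (Finset.univ.filter fun i =>
      Free p u i ∧ i ≠ j ∧ (i : ℕ) ≤ (j : ℕ) + p ∧ (j : ℕ) ≤ (i : ℕ) + p) := by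
    simp
  rw [hv, diffCount, ← hsplit, hnear, Finset.card_insert_of_notMem hjnot]
  ring

lemma deg_diff {x : {u : Fin n → Bool // IsFibStr p u} × Fin n} (hfree : Free p x.1.1 x.2) :
    ((FibCube p n).degree x.1 : ℤ) - ((FibCube p n).degree (flipVert p x) : ℤ)
      = (diffCount p x.1.1 x.2 : ℤ) := by
  rw [degree_eq, degree_eq, flipVert_of_free hfree, wt_flip hfree.self,
    zcount_split hfree]
  push_cast
  ring


lemma sum_card_filter {α β : Type*} [Fintype α] [Fintype β]
    (P : α → Prop) [DecidablePred P] (Q : α → β → Prop) [∀ a, DecidablePred (Q a)] :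
    ∑ a ∈ Finset.univ.filter P, (Finset.univ.filter fun b => Q a b).card
      = (Finset.univ.filter fun x : α × β => P x.1 ∧ Q x.1 x.2).card := by
  rw [Finset.sum_filter]
  simp only [Finset.card_filter]
  rw [Fintype.sum_prod_type]
  refine Finset.sum_congr rfl fun a _ => ?_
  by_cases h : P a
  · simp [h]
  · simp [h]

/-- Ascending triples `(u, j, i)` with `j < i ≤ j + p`, both free. -/
def ascFinset (p n : ℕ) : Finset (({u : Fin n → Bool // IsFibStr p u} × Fin n) × Fin n) :=
  Finset.univ.filter fun y =>
    Free p y.1.1.1 y.1.2 ∧ Free p y.1.1.1 y.2 ∧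
      (y.1.2 : ℕ) < (y.2 : ℕ) ∧ (y.2 : ℕ) ≤ (y.1.2 : ℕ) + p

lemma sum_diffCount (p n : ℕ) :
    ∑ x ∈ pairFinset p n, diffCount p x.1.1 x.2 = 2 * (ascFinset p n).card := by
  have h1 : ∑ x ∈ pairFinset p n, diffCount p x.1.1 x.2
      = (Finset.univ.filter fun y : ({u : Fin n → Bool // IsFibStr p u} × Fin n) × Fin n =>
          Free p y.1.1.1 y.1.2 ∧
            (Free p y.1.1.1 y.2 ∧ y.2 ≠ y.1.2 ∧
              (y.2 : ℕ) ≤ (y.1.2 : ℕ) + p ∧ (y.1.2 : ℕ) ≤ (y.2 : ℕ) + p)).card := by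
    rw [pairFinset]
    exact sum_card_filter _ _
  rw [h1]
  -- split the symmetric triple set into ascending and descending parts
  set S := Finset.univ.filter fun y : ({u : Fin n → Bool // IsFibStr p u} × Fin n) × Fin n =>
      Free p y.1.1.1 y.1.2 ∧
        (Free p y.1.1.1 y.2 ∧ y.2 ≠ y.1.2 ∧
          (y.2 : ℕ) ≤ (y.1.2 : ℕ) + p ∧ (y.1.2 : ℕ) ≤ (y.2 : ℕ) + p) with hS
  have hsplit := Finset.card_filter_add_card_filter_not
    (s := S) (p := fun y => (y.1.2 : ℕ) < (y.2 : ℕ))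
  have hasc : S.filter (fun y => (y.1.2 : ℕ) < (y.2 : ℕ)) = ascFinset p n := by
    rw [hS, ascFinset, Finset.filter_filter]
    refine Finset.filter_congr fun y _ => ?_
    constructor
    · rintro ⟨⟨h1, h2, h3, h4, h5⟩, h6⟩; exact ⟨h1, h2, h6, h4⟩
    · rintro ⟨h1, h2, h3, h4⟩
      exact ⟨⟨h1, h2, fun he => by rw [he] at h3; omega, h4, by omega⟩, h3⟩
  have hdesc : (S.filter (fun y => ¬ (y.1.2 : ℕ) < (y.2 : ℕ))).card = (ascFinset p n).card := by
    refine Finset.card_nbij (fun y => ((y.1.1, y.2), y.1.2)) ?_ ?_ ?_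
    · intro y hy
      rw [Finset.mem_coe, Finset.mem_filter, hS, Finset.mem_filter] at hy
      obtain ⟨⟨-, h1, h2, h3, h4, h5⟩, h6⟩ := hy
      show ((y.1.1, y.2), y.1.2) ∈ ascFinset p n
      rw [ascFinset, Finset.mem_filter]
      refine ⟨Finset.mem_univ _, ?_⟩
      show Free p y.1.1.1 y.2 ∧ Free p y.1.1.1 y.1.2 ∧
        (y.2 : ℕ) < (y.1.2 : ℕ) ∧ (y.1.2 : ℕ) ≤ (y.2 : ℕ) + p
      have : (y.2 : ℕ) ≠ (y.1.2 : ℕ) := fun he => h3 (Fin.ext he)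
      exact ⟨h2, h1, by omega, h5⟩
    · intro y1 h1 y2 h2 he
      simp only [Prod.mk.injEq] at he
      obtain ⟨⟨e1, e2⟩, e3⟩ := he
      exact Prod.ext (Prod.ext e1 e3) e2
    · intro y hy
      refine ⟨((y.1.1, y.2), y.1.2), ?_, rfl⟩
      rw [Finset.mem_coe, ascFinset, Finset.mem_filter] at hy
      obtain ⟨-, h1, h2, h3, h4⟩ := hy
      rw [Finset.mem_coe, Finset.mem_filter, hS, Finset.mem_filter]
      refine ⟨⟨Finset.mem_univ _, ?_⟩, ?_⟩
      · show Free p y.1.1.1 y.2 ∧ Free p y.1.1.1 y.1.2 ∧ y.1.2 ≠ y.2 ∧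
          (y.1.2 : ℕ) ≤ (y.2 : ℕ) + p ∧ (y.2 : ℕ) ≤ (y.1.2 : ℕ) + p
        exact ⟨h2, h1, fun he => by rw [he] at h3; omega, by omega, h4⟩
      · show ¬ ((y.2 : ℕ) < (y.1.2 : ℕ))
        omega
  rw [hasc, hdesc] at hsplit
  omega


lemma Free.true_far {u : Fin n → Bool} {j t : Fin n} (h : Free p u j) (ht : u t = true) :
    (t : ℕ) + p + 1 ≤ (j : ℕ) ∨ (j : ℕ) + p + 1 ≤ (t : ℕ) := by
  by_contra hc
  push_neg at hc
  rw [h t (by omega) (by omega)] at ht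
  simp at ht

/-- Delete the `d` coordinates `c+1, …, c+d` from a string of length `m + d`. -/
def delStr (d : ℕ) {m : ℕ} (u : Fin (m + d) → Bool) (c : ℕ) : Fin m → Bool :=
  fun t => if (t : ℕ) ≤ c then u ⟨t, Nat.lt_of_lt_of_le t.isLt (Nat.le_add_right m d)⟩
    else u ⟨(t : ℕ) + d, Nat.add_lt_add_right t.isLt d⟩

/-- Insert `d` zeros after position `c` into a string of length `m`. -/
def insStr (d : ℕ) {m : ℕ} (w : Fin m → Bool) (c : ℕ) : Fin (m + d) → Bool :=
  fun s => if h1 : (s : ℕ) ≤ c ∧ (s : ℕ) < m then w ⟨s, h1.2⟩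
    else if (s : ℕ) ≤ c + d then false
    else if h3 : (s : ℕ) - d < m then w ⟨(s : ℕ) - d, h3⟩ else false

lemma delStr_lo {m d : ℕ} (u : Fin (m + d) → Bool) (c : ℕ) (t : Fin m) (h : (t : ℕ) ≤ c) :
    delStr d u c t = u ⟨t, Nat.lt_of_lt_of_le t.isLt (Nat.le_add_right m d)⟩ :=
  if_pos h

lemma delStr_hi {m d : ℕ} (u : Fin (m + d) → Bool) (c : ℕ) (t : Fin m) (h : c < (t : ℕ)) :
    delStr d u c t = u ⟨(t : ℕ) + d, Nat.add_lt_add_right t.isLt d⟩ :=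
  if_neg (by omega)

lemma insStr_lo {m d : ℕ} (w : Fin m → Bool) (c : ℕ) (hc : c < m) (s : Fin (m + d))
    (hs : (s : ℕ) ≤ c) :
    insStr d w c s = w ⟨s, Nat.lt_of_le_of_lt hs hc⟩ := by
  rw [insStr, dif_pos ⟨hs, Nat.lt_of_le_of_lt hs hc⟩]

lemma insStr_mid {m d : ℕ} (w : Fin m → Bool) (c : ℕ) (s : Fin (m + d))
    (h1 : c < (s : ℕ)) (h2 : (s : ℕ) ≤ c + d) :
    insStr d w c s = false := by
  rw [insStr, dif_neg (by omega), if_pos h2]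

lemma insStr_hi {m d : ℕ} (w : Fin m → Bool) (c : ℕ) (s : Fin (m + d))
    (h : c + d < (s : ℕ)) :
    insStr d w c s = w ⟨(s : ℕ) - d, by have := s.isLt; omega⟩ := by
  rw [insStr, dif_neg (by omega), if_neg (by omega), dif_pos (by have := s.isLt; omega)]

lemma del_isFibStr {m d : ℕ} {u : Fin (m + d) → Bool} (hu : IsFibStr p u)
    {j i : Fin (m + d)} (hj : Free p u j) (hi : Free p u i)
    (hij : (i : ℕ) = (j : ℕ) + d) :
    IsFibStr p (delStr d u (j : ℕ)) := by
  intro a b ha hb hab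
  rcases le_or_gt (a : ℕ) (j : ℕ) with h1 | h1 <;> rcases le_or_gt (b : ℕ) (j : ℕ) with h2 | h2
  · rw [delStr_lo _ _ _ h1] at ha
    rw [delStr_lo _ _ _ h2] at hb
    exact hu _ _ ha hb hab
  · rw [delStr_lo _ _ _ h1] at ha
    rw [delStr_hi _ _ _ h2] at hb
    have hfa := hj.true_far ha
    have hfb := hi.true_far hb
    simp only [Fin.val_mk] at hfa hfb  -- reduce mk coercions
    omega
  · omega
  · rw [delStr_hi _ _ _ h1] at ha
    rw [delStr_hi _ _ _ h2] at hb
    have := hu _ _ ha hb (by simpa using by omega : ((⟨(a : ℕ) + d, _⟩ : Fin (m + d)) : ℕ) < (⟨(b : ℕ) + d, _⟩ : Fin (m + d)))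
    simp only [Fin.val_mk] at this
    omega

lemma del_free {m d : ℕ} {u : Fin (m + d) → Bool}
    {j i : Fin (m + d)} (hj : Free p u j) (hi : Free p u i)
    (hij : (i : ℕ) = (j : ℕ) + d) (hjm : (j : ℕ) < m) :
    Free p (delStr d u (j : ℕ)) ⟨(j : ℕ), hjm⟩ := by
  intro t h1 h2
  simp only [Fin.val_mk] at h1 h2
  rcases le_or_gt (t : ℕ) (j : ℕ) with h | h
  · rw [delStr_lo _ _ _ h]
    exact hj _ (by simpa using h1) (by simpa using h2)
  · rw [delStr_hi _ _ _ h]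
    exact hi _ (by simp; omega) (by simp; omega)

lemma ins_isFibStr {m d : ℕ} {w : Fin m → Bool} (hw : IsFibStr p w)
    {k : Fin m} (hk : Free p w k) :
    IsFibStr p (insStr d w (k : ℕ)) := by
  have hkm : (k : ℕ) < m := k.isLt
  intro a b ha hb hab
  rcases le_or_gt (a : ℕ) (k : ℕ) with h1 | h1
  · rw [insStr_lo _ _ hkm _ h1] at ha
    rcases le_or_gt (b : ℕ) (k : ℕ) with h2 | h2
    · rw [insStr_lo _ _ hkm _ h2] at hb
      exact hw _ _ ha hb hab
    · rcases le_or_gt (b : ℕ) ((k : ℕ) + d) with h3 | h3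
      · rw [insStr_mid _ _ _ h2 h3] at hb; simp at hb
      · rw [insStr_hi _ _ _ h3] at hb
        have hfa := hk.true_far ha
        have hfb := hk.true_far hb
        simp only [Fin.val_mk] at hfa hfb
        omega
  · rcases le_or_gt (a : ℕ) ((k : ℕ) + d) with h3 | h3
    · rw [insStr_mid _ _ _ h1 h3] at ha; simp at ha
    · rw [insStr_hi _ _ _ h3] at ha
      rcases le_or_gt (b : ℕ) ((k : ℕ) + d) with h4 | h4
      · omega
      · rw [insStr_hi _ _ _ h4] at hb
        have := hw _ _ ha hb (show ((⟨(a : ℕ) - d, _⟩ : Fin m) : ℕ) < (⟨(b : ℕ) - d, _⟩ : Fin m) by simp; omega)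
        simp only [Fin.val_mk] at this
        omega

lemma ins_free_left {m d : ℕ} {w : Fin m → Bool} {k : Fin m} (hk : Free p w k) :
    Free p (insStr d w (k : ℕ)) ⟨(k : ℕ), Nat.lt_of_lt_of_le k.isLt (Nat.le_add_right m d)⟩ := by
  have hkm : (k : ℕ) < m := k.isLt
  intro t h1 h2
  simp only [Fin.val_mk] at h1 h2
  rcases le_or_gt (t : ℕ) (k : ℕ) with h | h
  · rw [insStr_lo _ _ hkm _ h]
    exact hk _ (by simpa using h1) (by simpa using h2)
  · rcases le_or_gt (t : ℕ) ((k : ℕ) + d) with h3 | h3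
    · exact insStr_mid _ _ _ h h3
    · rw [insStr_hi _ _ _ h3]
      exact hk _ (by simp; omega) (by simp; omega)

lemma ins_free_right {m d : ℕ} {w : Fin m → Bool} {k : Fin m} (hk : Free p w k) :
    Free p (insStr d w (k : ℕ)) ⟨(k : ℕ) + d, Nat.add_lt_add_right k.isLt d⟩ := by
  have hkm : (k : ℕ) < m := k.isLt
  intro t h1 h2
  simp only [Fin.val_mk] at h1 h2
  rcases le_or_gt (t : ℕ) (k : ℕ) with h | h
  · rw [insStr_lo _ _ hkm _ h]
    exact hk _ (by simp; omega) (by simp; omega)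
  · rcases le_or_gt (t : ℕ) ((k : ℕ) + d) with h3 | h3
    · exact insStr_mid _ _ _ h h3
    · rw [insStr_hi _ _ _ h3]
      exact hk _ (by simp; omega) (by simp; omega)

lemma del_ins {m d : ℕ} (w : Fin m → Bool) (k : Fin m) :
    delStr d (insStr d w (k : ℕ)) (k : ℕ) = w := by
  have hkm : (k : ℕ) < m := k.isLt
  funext t
  rcases le_or_gt (t : ℕ) (k : ℕ) with h | h
  · rw [delStr_lo _ _ _ h, insStr_lo _ _ hkm _ (by simpa using h)]
  · rw [delStr_hi _ _ _ h, insStr_hi _ _ _ (by simp; omega)]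
    congr 1
    exact Fin.ext (by simp)

lemma ins_del {m d : ℕ} {u : Fin (m + d) → Bool} (hdp : d ≤ p)
    {j i : Fin (m + d)} (hj : Free p u j) (hij : (i : ℕ) = (j : ℕ) + d)
    (hjm : (j : ℕ) < m) :
    insStr d (delStr d u (j : ℕ)) (j : ℕ) = u := by
  funext s
  rcases le_or_gt (s : ℕ) (j : ℕ) with h | h
  · rw [insStr_lo _ _ hjm _ h, delStr_lo _ _ _ (by simpa using h)]
  · rcases le_or_gt (s : ℕ) ((j : ℕ) + d) with h3 | h3
    · rw [insStr_mid _ _ _ h h3]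
      exact (hj s (by omega) (by omega)).symm
    · rw [insStr_hi _ _ _ h3, delStr_hi _ _ _ (by simp; omega)]
      congr 1
      exact Fin.ext (by simp; omega)


/-- Package a string as a vertex, defaulting to the all-zeros vertex. -/
def mkVert (p n : ℕ) (u : Fin n → Bool) : {u : Fin n → Bool // IsFibStr p u} :=
  if h : IsFibStr p u then ⟨u, h⟩ else ⟨fun _ => false, fun a b ha => by simp at ha⟩

lemma mkVert_val {u : Fin n → Bool} (h : IsFibStr p u) : (mkVert p n u).1 = u := by
  rw [mkVert, dif_pos h]

lemma fiber_card (p m d : ℕ) (hd : 1 ≤ d) (hdp : d ≤ p) :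
    ((ascFinset p (m + d)).filter fun y => (y.2 : ℕ) - (y.1.2 : ℕ) = d).card
      = (pairFinset p m).card := by
  refine Finset.card_bij'
    (fun y hy => (mkVert p m (delStr d y.1.1.1 (y.1.2 : ℕ)),
      ⟨(y.1.2 : ℕ), by
        simp only [Finset.mem_filter, ascFinset] at hy
        have := y.2.isLt
        omega⟩))
    (fun x hx => ((mkVert p (m + d) (insStr d x.1.1 (x.2 : ℕ)),
      ⟨(x.2 : ℕ), Nat.lt_of_lt_of_le x.2.isLt (Nat.le_add_right m d)⟩),
      ⟨(x.2 : ℕ) + d, Nat.add_lt_add_right x.2.isLt d⟩))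
    ?_ ?_ ?_ ?_
  · intro y hy
    simp only [Finset.mem_filter, ascFinset] at hy
    obtain ⟨⟨-, h1, h2, h3, h4⟩, h5⟩ := hy
    have hij : (y.2 : ℕ) = (y.1.2 : ℕ) + d := by omega
    have hjm : (y.1.2 : ℕ) < m := by have := y.2.isLt; omega
    rw [pairFinset, Finset.mem_filter]
    refine ⟨Finset.mem_univ _, ?_⟩
    show Free p (mkVert p m (delStr d y.1.1.1 (y.1.2 : ℕ))).1 ⟨(y.1.2 : ℕ), _⟩
    rw [mkVert_val (del_isFibStr y.1.1.2 h1 h2 hij)]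
    exact del_free h1 h2 hij hjm
  · intro x hx
    rw [pairFinset, Finset.mem_filter] at hx
    have hfree : Free p x.1.1 x.2 := hx.2
    simp only [Finset.mem_filter, ascFinset]
    have hv : IsFibStr p (insStr d x.1.1 (x.2 : ℕ)) := ins_isFibStr x.1.2 hfree
    refine ⟨⟨Finset.mem_univ _, ?_, ?_, ?_, ?_⟩, ?_⟩
    · show Free p (mkVert p (m + d) (insStr d x.1.1 (x.2 : ℕ))).1 _
      rw [mkVert_val hv]
      exact ins_free_left hfree
    · show Free p (mkVert p (m + d) (insStr d x.1.1 (x.2 : ℕ))).1 _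
      rw [mkVert_val hv]
      exact ins_free_right hfree
    · show (x.2 : ℕ) < (x.2 : ℕ) + d
      omega
    · show (x.2 : ℕ) + d ≤ (x.2 : ℕ) + p
      omega
    · show ((x.2 : ℕ) + d) - (x.2 : ℕ) = d
      omega
  · intro y hy
    simp only [Finset.mem_filter, ascFinset] at hy
    obtain ⟨⟨-, h1, h2, h3, h4⟩, h5⟩ := hy
    have hij : (y.2 : ℕ) = (y.1.2 : ℕ) + d := by omega
    have hjm : (y.1.2 : ℕ) < m := by have := y.2.isLt; omega
    have hval : (mkVert p m (delStr d y.1.1.1 (y.1.2 : ℕ))).1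
        = delStr d y.1.1.1 (y.1.2 : ℕ) := mkVert_val (del_isFibStr y.1.1.2 h1 h2 hij)
    have hins : insStr d (delStr d y.1.1.1 (y.1.2 : ℕ)) (y.1.2 : ℕ) = y.1.1.1 :=
      ins_del hdp h1 hij hjm
    refine Prod.ext (Prod.ext ?_ ?_) ?_
    · apply Subtype.ext
      show (mkVert p (m + d)
          (insStr d (mkVert p m (delStr d y.1.1.1 (y.1.2 : ℕ))).1 ((y.1.2 : ℕ)))).1
        = y.1.1.1
      rw [hval]
      rw [mkVert_val (by rw [hins]; exact y.1.1.2)]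
      exact hins
    · exact Fin.ext rfl
    · exact Fin.ext (by simp; omega)
  · intro x hx
    rw [pairFinset, Finset.mem_filter] at hx
    have hfree : Free p x.1.1 x.2 := hx.2
    have hv : IsFibStr p (insStr d x.1.1 (x.2 : ℕ)) := ins_isFibStr x.1.2 hfree
    refine Prod.ext ?_ ?_
    · apply Subtype.ext
      show (mkVert p m
          (delStr d (mkVert p (m + d) (insStr d x.1.1 (x.2 : ℕ))).1 ((x.2 : ℕ)))).1 = x.1.1
      rw [mkVert_val hv]
      have hdel : delStr d (insStr d x.1.1 (x.2 : ℕ)) (x.2 : ℕ) = x.1.1 := del_ins x.1.1 x.2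
      rw [mkVert_val (by rw [hdel]; exact x.1.2)]
      exact hdel
    · exact Fin.ext rfl

lemma asc_card (p n : ℕ) (hn : p ≤ n) :
    (ascFinset p n).card = ∑ d ∈ Finset.Icc 1 p, (pairFinset p (n - d)).card := by
  rw [Finset.card_eq_sum_card_fiberwise
    (f := fun y => (y.2 : ℕ) - (y.1.2 : ℕ)) (t := Finset.Icc 1 p) ?_]
  · refine Finset.sum_congr rfl fun d hd => ?_
    rw [Finset.mem_Icc] at hd
    obtain ⟨m, rfl⟩ : ∃ m, n = m + d := ⟨n - d, by omega⟩
    rw [Nat.add_sub_cancel]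
    exact fiber_card p m d hd.1 hd.2
  · intro y hy
    simp only [ascFinset, Finset.mem_coe, Finset.mem_filter] at hy
    rw [Finset.mem_coe, Finset.mem_Icc]
    show 1 ≤ (y.2 : ℕ) - (y.1.2 : ℕ) ∧ (y.2 : ℕ) - (y.1.2 : ℕ) ≤ p
    omega

end Aux

/-- Irregularity of `Γ^p_n`: for `n ≥ p`,
`irr(Γ^p_n) = 2·Σ_{d=1}^p |E(Γ^p_{n-d})|`. -/
theorem irregularity_fibCube (p n : ℕ) (hp : 1 ≤ p) (hn : p ≤ n) :
    ∑ e ∈ (FibCube p n).edgeFinset,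
      Sym2.lift ⟨fun u v => |((FibCube p n).degree u : ℤ) - ((FibCube p n).degree v : ℤ)|,
        fun u v => by simp [abs_sub_comm]⟩ e =
      2 * ∑ d ∈ Finset.Icc 1 p, (Nat.card (FibCube p (n - d)).edgeSet : ℤ) := by
  rw [sum_edgeFinset]
  have hterm : ∀ x ∈ pairFinset p n,
      Sym2.lift ⟨fun u v => |((FibCube p n).degree u : ℤ) - ((FibCube p n).degree v : ℤ)|,
        fun u v => by simp [abs_sub_comm]⟩ s(x.1, flipVert p x)
        = (diffCount p x.1.1 x.2 : ℤ) := by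
    intro x hx
    have hfree : Free p x.1.1 x.2 := (Finset.mem_filter.mp hx).2
    rw [Sym2.lift_mk]
    show |((FibCube p n).degree x.1 : ℤ) - ((FibCube p n).degree (flipVert p x) : ℤ)|
      = (diffCount p x.1.1 x.2 : ℤ)
    rw [deg_diff hfree, Int.abs_natCast]
  rw [Finset.sum_congr rfl hterm]
  have h1 : ∑ x ∈ pairFinset p n, (diffCount p x.1.1 x.2 : ℤ)
      = ((∑ x ∈ pairFinset p n, diffCount p x.1.1 x.2 : ℕ) : ℤ) := by
    push_cast
    rfl
  rw [h1, sum_diffCount p n, asc_card p n hn]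
  have h2 : ∀ d ∈ Finset.Icc 1 p,
      (Nat.card (FibCube p (n - d)).edgeSet : ℤ) = ((pairFinset p (n - d)).card : ℤ) := by
    intro d _
    exact_mod_cast congrArg (Nat.cast : ℕ → ℤ) (edge_count p (n - d))
  rw [Finset.sum_congr rfl h2]
  push_cast
  ring
end
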